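/- Let P be the set of partitions into odd coloured parts which are finite non-increasing subsequences of the chain ... ≥ 3_{c_1} ≥ 2_{c_0} ≥ 1_{c_{\bar 1}} ≥ ... ≥ 1_{c_{\bar n}} ≥ 1_{c_n} ≥ ... ≥ 1_{c_1} ≥ 0_{c_0}, always ending in 0_{c_0}, where parts 2k_{c_0} (k>0) may repeat and all other parts appear at most once, with odd parts having colours among c_1,c_{\bar 1},...,c_n,c_{\bar n} and even parts colour c_0. With c_0 = 1, the generating function ∑_{π∈P} C(π) q^{|π|} equals ∏_{k=1}^n ∏_{j≥0}(1 + c_k q^{2j+1})(1 + c_k^{-1} q^{2j+1}) / ∏_{j≥1}(1 - q^{2j}), where C(π) is the product of the colours of the parts of π (with c_{\bar k} = c_k^{-1}) and |π| the sum of the parts. -/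

import Mathlib

/-!
Expanding the finite products, the coefficient of `X ^ a` in
`∏ (1 + c X^(2j+1))(1 + c⁻¹ X^(2j+1)) · ∏_j ∑_i X^(i(2j+2))` (indices up to `M ≥ a`) is exactly
the coloured count `∑ C(π)` over partitions of `a`. The second product is inverse to `(q²;q²)_∞`
modulo `X ^ (M + 1)` by the geometric series, so all identities can be checked in
`R⟦X⟧ ⧸ (X ^ (N + 1))`, where every product involved stabilises once its index passes `N`.
-/

open PowerSeries Finset

theorem Units.val_zpow_natCast_sub {M : Type*} [CommMonoid M] (u : Mˣ) (α β : ℕ) :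
    ((u ^ ((α : ℤ) - β) : Mˣ) : M) = (u : M) ^ α * ((u⁻¹ : Mˣ) : M) ^ β := by
  rw [zpow_sub, zpow_natCast, zpow_natCast, ← inv_pow, Units.val_mul, Units.val_pow_eq_pow_val,
    Units.val_pow_eq_pow_val]

namespace GroundedPartition

variable {R : Type*} [CommRing R]

noncomputable abbrev modXPow (N : ℕ) : R⟦X⟧ →+* R⟦X⟧ ⧸ Ideal.span {(X : R⟦X⟧) ^ (N + 1)} :=
  Ideal.Quotient.mk _

theorem modXPow_eq_iff {N : ℕ} {f g : R⟦X⟧} :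
    modXPow N f = modXPow N g ↔ ∀ i ≤ N, coeff i f = coeff i g := by
  simp only [modXPow, Ideal.Quotient.eq, Ideal.mem_span_singleton, X_pow_dvd_iff, map_sub,
    sub_eq_zero, Nat.lt_succ_iff]

theorem modXPow_X_pow {N m : ℕ} (h : N < m) : modXPow N (X ^ m : R⟦X⟧) = 0 :=
  Ideal.Quotient.eq_zero_iff_mem.2 (Ideal.mem_span_singleton.2 (pow_dvd_pow X h))

theorem modXPow_one_add_C_mul_X_pow {N m : ℕ} (r : R) (h : N < m) :
    modXPow N (1 + C r * X ^ m) = 1 := by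
  rw [map_add, map_mul, modXPow_X_pow h, mul_zero, add_zero, map_one]

theorem modXPow_one_sub_X_pow {N m : ℕ} (h : N < m) : modXPow N (1 - X ^ m : R⟦X⟧) = 1 := by
  rw [map_sub, modXPow_X_pow h, sub_zero, map_one]

theorem modXPow_prod_range {a M : ℕ} (f : ℕ → R⟦X⟧) (hf : ∀ j, a < j → modXPow a (f j) = 1)
    (h : a ≤ M) :
    modXPow a (∏ j ∈ range (M + 1), f j) = modXPow a (∏ j ∈ range (a + 1), f j) := by
  simp only [map_prod]
  exact (prod_subset (range_subset_range.2 (by omega)) fun j _ hj => hf j (by simpa using hj)).symm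

theorem modXPow_eq_of_coeff_eq {F : R⟦X⟧} {f : ℕ → R⟦X⟧}
    (hf : ∀ {a M : ℕ}, a ≤ M → modXPow a (f M) = modXPow a (f a))
    (hF : ∀ a, coeff a F = coeff a (f a)) (N : ℕ) : modXPow N F = modXPow N (f N) :=
  modXPow_eq_iff.2 fun a ha => (hF a).trans (modXPow_eq_iff.1 (hf ha) a le_rfl).symm

noncomputable def oddProduct (n : ℕ) (c : Fin n → Rˣ) (M : ℕ) : R⟦X⟧ :=
  ∏ k : Fin n, ∏ j ∈ range (M + 1),
    ((1 + C ((c k : Rˣ) : R) * X ^ (2 * j + 1)) * (1 + C (((c k)⁻¹ : Rˣ) : R) * X ^ (2 * j + 1)))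

noncomputable def evenProduct (M : ℕ) : R⟦X⟧ :=
  ∏ j ∈ range (M + 1), ∑ i ∈ range (M + 1), (X ^ (2 * (j + 1))) ^ i

noncomputable def eulerProduct (M : ℕ) : R⟦X⟧ :=
  ∏ j ∈ range (M + 1), (1 - X ^ (2 * (j + 1)))

theorem modXPow_oddProduct {n : ℕ} (c : Fin n → Rˣ) {a M : ℕ} (h : a ≤ M) :
    modXPow a (oddProduct n c M) = modXPow a (oddProduct n c a) := by
  rw [oddProduct, oddProduct, map_prod, map_prod]
  refine prod_congr rfl fun k _ => modXPow_prod_range _ (fun j hj => ?_) h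
  rw [map_mul, modXPow_one_add_C_mul_X_pow _ (by omega), modXPow_one_add_C_mul_X_pow _ (by omega),
    one_mul]

theorem modXPow_eulerProduct {a M : ℕ} (h : a ≤ M) :
    modXPow a (eulerProduct M : R⟦X⟧) = modXPow a (eulerProduct a) :=
  modXPow_prod_range _ (fun _ hj => modXPow_one_sub_X_pow (by omega)) h

theorem evenProduct_mul_eulerProduct (M : ℕ) :
    (evenProduct M * eulerProduct M : R⟦X⟧) =
      ∏ j ∈ range (M + 1), (1 - (X ^ (2 * (j + 1))) ^ (M + 1)) := by
  rw [evenProduct, eulerProduct, ← prod_mul_distrib]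
  exact prod_congr rfl fun j _ => geom_sum_mul_neg _ _

theorem modXPow_evenProduct_mul_eulerProduct {a M : ℕ} (h : a ≤ M) :
    modXPow a (evenProduct M * eulerProduct M : R⟦X⟧) = 1 := by
  rw [evenProduct_mul_eulerProduct, map_prod]
  refine prod_eq_one fun j _ => ?_
  rw [← pow_mul]
  exact modXPow_one_sub_X_pow (by nlinarith)

theorem modXPow_evenProduct {a M : ℕ} (h : a ≤ M) :
    modXPow a (evenProduct M : R⟦X⟧) = modXPow a (evenProduct a) := by
  -- both are inverses of `eulerProduct a` modulo `X ^ (a + 1)`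
  have hM : modXPow a (evenProduct M : R⟦X⟧) * modXPow a (eulerProduct a) = 1 := by
    rw [← modXPow_eulerProduct h, ← map_mul, modXPow_evenProduct_mul_eulerProduct h]
  have ha : modXPow a (eulerProduct a : R⟦X⟧) * modXPow a (evenProduct a) = 1 := by
    rw [mul_comm, ← map_mul, modXPow_evenProduct_mul_eulerProduct le_rfl]
  exact left_inv_eq_right_inv hM ha

theorem coeff_sum_monomial {α : Type*} (s : Finset α) (d : α → ℕ) (u : α → R) (a : ℕ) :
    coeff a (∑ x ∈ s, monomial (d x) (u x)) = ∑ x ∈ s with d x = a, u x := by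
  rw [map_sum, sum_filter]
  exact sum_congr rfl fun x _ => by rw [coeff_monomial]; exact if_congr eq_comm rfl rfl

theorem sum_monomial_mul_sum_monomial {α β : Type*} [Fintype α] [Fintype β] (d : α → ℕ)
    (e : β → ℕ) (u : α → R) (v : β → R) :
    (∑ x, monomial (d x) (u x)) * ∑ y, monomial (e y) (v y) =
      ∑ p : α × β, monomial (d p.1 + e p.2) (u p.1 * v p.2) := by
  rw [sum_mul_sum, Fintype.sum_prod_type]
  simp_rw [monomial_mul_monomial]

theorem prod_one_add_monomial {ι : Type*} (s : Finset ι) (d : ι → ℕ) (r : R) :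
    ∏ i ∈ s, (1 + monomial (d i) r) = ∑ t ∈ s.powerset, monomial (∑ i ∈ t, d i) (r ^ #t) := by
  rw [prod_one_add]
  simp_rw [prod_monomial, prod_const]

theorem prod_range_one_add_C_mul_X_pow_odd (r : R) (M : ℕ) :
    ∏ j ∈ range (M + 1), (1 + C r * X ^ (2 * j + 1)) =
      ∑ t : Finset (Fin (M + 1)), monomial (∑ j ∈ t, (2 * (j : ℕ) + 1)) (r ^ #t) := by
  rw [← Fin.prod_univ_eq_prod_range (fun j => 1 + C r * X ^ (2 * j + 1)), ← powerset_univ]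
  simp_rw [← monomial_eq_C_mul_X_pow]
  exact prod_one_add_monomial _ _ _

theorem prod_prod_range_one_add_C_mul_X_pow_odd {n : ℕ} (u : Fin n → R) (M : ℕ) :
    ∏ k, ∏ j ∈ range (M + 1), (1 + C (u k) * X ^ (2 * j + 1)) =
      ∑ f : Fin n → Finset (Fin (M + 1)),
        monomial (∑ k, ∑ j ∈ f k, (2 * (j : ℕ) + 1)) (∏ k, u k ^ #(f k)) := by
  simp_rw [prod_range_one_add_C_mul_X_pow_odd, prod_univ_sum, Fintype.piFinset_univ, prod_monomial]

theorem evenProduct_eq_sum_monomial (M : ℕ) :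
    (evenProduct M : R⟦X⟧) =
      ∑ m : Fin (M + 1) → Fin (M + 1), monomial (∑ j, (m j : ℕ) * (2 * (j : ℕ) + 2)) 1 := by
  have hfactor : ∀ j : ℕ, ∑ i ∈ range (M + 1), (X ^ (2 * (j + 1))) ^ i =
      ∑ i : Fin (M + 1), monomial ((i : ℕ) * (2 * j + 2)) (1 : R) := fun j => by
    rw [← Fin.sum_univ_eq_sum_range (fun i => (X ^ (2 * (j + 1)) : R⟦X⟧) ^ i)]
    simp_rw [X_pow_eq, monomial_pow, one_pow, mul_add_one]
  rw [evenProduct, ← Fin.prod_univ_eq_prod_range]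
  simp_rw [hfactor, prod_univ_sum, Fintype.piFinset_univ, prod_monomial, prod_const_one]

/-- A coloured partition with parts at most `2M + 2` and multiplicities at most `M`: `x.1 k` and
`x.2.1 k` are the sets of `j` such that `2j + 1` occurs with colour `c_k`, resp. `c_k⁻¹`, and
`x.2.2 j` is the multiplicity of the even part `2j + 2`. -/
abbrev ColouredPartition (n M : ℕ) :=
  (Fin n → Finset (Fin (M + 1))) × (Fin n → Finset (Fin (M + 1))) × (Fin (M + 1) → Fin (M + 1))

namespace ColouredPartition

variable {n M : ℕ}

def size (x : ColouredPartition n M) : ℕ :=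
  (∑ k, ∑ j ∈ x.1 k, (2 * (j : ℕ) + 1)) + (∑ k, ∑ j ∈ x.2.1 k, (2 * (j : ℕ) + 1)) +
    ∑ j, (x.2.2 j : ℕ) * (2 * (j : ℕ) + 2)

def colour (c : Fin n → Rˣ) (x : ColouredPartition n M) : R :=
  ∏ k, ((c k ^ (((x.1 k).card : ℤ) - ((x.2.1 k).card : ℤ)) : Rˣ) : R)

end ColouredPartition

theorem oddProduct_mul_evenProduct {n : ℕ} (c : Fin n → Rˣ) (M : ℕ) :
    oddProduct n c M * evenProduct M =
      ∑ x : ColouredPartition n M, monomial x.size (x.colour c) := by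
  simp_rw [oddProduct, prod_mul_distrib]
  rw [prod_prod_range_one_add_C_mul_X_pow_odd, prod_prod_range_one_add_C_mul_X_pow_odd,
    evenProduct_eq_sum_monomial, mul_assoc, sum_monomial_mul_sum_monomial,
    sum_monomial_mul_sum_monomial]
  refine Fintype.sum_congr _ _ fun x => ?_
  rw [ColouredPartition.size, ColouredPartition.colour, mul_one, ← prod_mul_distrib, add_assoc]
  simp_rw [Units.val_zpow_natCast_sub]

theorem coeff_oddProduct_mul_evenProduct {n : ℕ} (c : Fin n → Rˣ) (M a : ℕ) :
    coeff a (oddProduct n c M * evenProduct M) =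
      ∑ x : ColouredPartition n M with x.size = a, x.colour c := by
  rw [oddProduct_mul_evenProduct, coeff_sum_monomial]

end GroundedPartition

open GroundedPartition in
theorem stmt11_general {R : Type*} [CommRing R] (n : ℕ) (c : Fin n → Rˣ)
    (G E P : PowerSeries R)
    (hG : ∀ N : ℕ, PowerSeries.coeff N G =
      ∑ x ∈ Finset.univ.filter
          (fun x : (Fin n → Finset (Fin (N + 1))) × (Fin n → Finset (Fin (N + 1))) ×
              (Fin (N + 1) → Fin (N + 1)) =>
            ((∑ k : Fin n, ∑ j ∈ x.1 k, (2 * (j : ℕ) + 1)) +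
                (∑ k : Fin n, ∑ j ∈ x.2.1 k, (2 * (j : ℕ) + 1)) +
                ∑ j : Fin (N + 1), (x.2.2 j : ℕ) * (2 * (j : ℕ) + 2)) = N),
        ∏ k : Fin n, ((c k ^ (((x.1 k).card : ℤ) - ((x.2.1 k).card : ℤ)) : Rˣ) : R))
    (hE : ∀ N : ℕ, PowerSeries.coeff N E =
      PowerSeries.coeff N (∏ j ∈ Finset.range (N + 1),
        (1 - PowerSeries.X ^ (2 * (j + 1)) : PowerSeries R)))
    (hP : ∀ N : ℕ, PowerSeries.coeff N P =
      PowerSeries.coeff N (∏ k : Fin n, ∏ j ∈ Finset.range (N + 1),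
        ((1 + PowerSeries.C ((c k : Rˣ) : R) * PowerSeries.X ^ (2 * j + 1)) *
          (1 + PowerSeries.C (((c k)⁻¹ : Rˣ) : R) * PowerSeries.X ^ (2 * j + 1))))) :
    G * E = P := by
  have hG' : ∀ N, modXPow N G = modXPow N (oddProduct n c N * evenProduct N) :=
    modXPow_eq_of_coeff_eq
      (fun h => by rw [map_mul, map_mul, modXPow_oddProduct c h, modXPow_evenProduct h])
      (fun a => (hG a).trans (coeff_oddProduct_mul_evenProduct c a a).symm)
  have hE' : ∀ N, modXPow N E = modXPow N (eulerProduct N) :=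
    modXPow_eq_of_coeff_eq modXPow_eulerProduct hE
  have hP' : ∀ N, modXPow N P = modXPow N (oddProduct n c N) :=
    modXPow_eq_of_coeff_eq (modXPow_oddProduct c) hP
  ext N
  refine modXPow_eq_iff.1 ?_ N le_rfl
  rw [map_mul, hG', hE', hP', ← map_mul, mul_assoc, map_mul (modXPow N) (oddProduct n c N),
    modXPow_evenProduct_mul_eulerProduct le_rfl, mul_one]

/-- Generating function for the grounded partitions coming from the level-1 module of
`A_{2n}^{(2)}`: partitions whose odd parts `2j+1` appear at most once with each of the
`2n` colours `c₁,c₁⁻¹,…,c_n,c_n⁻¹` and whose positive even parts (colour `c₀ = 1`) may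
repeat arbitrarily.  Such a partition of `N` is encoded by the sets `x.1 k` (resp.
`x.2.1 k`) of `j`'s with part `2j+1` coloured `c_k` (resp. `c_k⁻¹`) and the multiplicity
function `x.2.2` of the even parts `2(j+1)`; its colour is `∏ c_k^(|x.1 k| - |x.2.1 k|)`.
Then `∑_π C(π)q^{|π|} = ∏_{k=1}^n (-c_k q;q²)_∞(-c_k⁻¹q;q²)_∞ / (q²;q²)_∞`, i.e.
`G * E = P` where `E = (q²;q²)_∞` and `P` is the double product, both characterized
coefficientwise by truncation. -/
theorem stmt11 {R : Type*} [CommRing R] (n : ℕ) (hn : 0 < n) (c : Fin n → Rˣ)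
    (G E P : PowerSeries R)
    (hG : ∀ N : ℕ, PowerSeries.coeff N G =
      ∑ x ∈ Finset.univ.filter
          (fun x : (Fin n → Finset (Fin (N + 1))) × (Fin n → Finset (Fin (N + 1))) ×
              (Fin (N + 1) → Fin (N + 1)) =>
            ((∑ k : Fin n, ∑ j ∈ x.1 k, (2 * (j : ℕ) + 1)) +
                (∑ k : Fin n, ∑ j ∈ x.2.1 k, (2 * (j : ℕ) + 1)) +
                ∑ j : Fin (N + 1), (x.2.2 j : ℕ) * (2 * (j : ℕ) + 2)) = N),
        ∏ k : Fin n, ((c k ^ (((x.1 k).card : ℤ) - ((x.2.1 k).card : ℤ)) : Rˣ) : R))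
    (hE : ∀ N : ℕ, PowerSeries.coeff N E =
      PowerSeries.coeff N (∏ j ∈ Finset.range (N + 1),
        (1 - PowerSeries.X ^ (2 * (j + 1)) : PowerSeries R)))
    (hP : ∀ N : ℕ, PowerSeries.coeff N P =
      PowerSeries.coeff N (∏ k : Fin n, ∏ j ∈ Finset.range (N + 1),
        ((1 + PowerSeries.C ((c k : Rˣ) : R) * PowerSeries.X ^ (2 * j + 1)) *
          (1 + PowerSeries.C (((c k)⁻¹ : Rˣ) : R) * PowerSeries.X ^ (2 * j + 1))))) :
    G * E = P :=
  stmt11_general n c G E P hG hE hP
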